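/- arXiv:1002.0606 — 2 statements merged into one kernel-verified Lean document; each statement's English description precedes it below -/
import Mathlib

section
/- Let θ₀, θ_R, θ₀', θ_R', θ₀'', θ_R'' ∈ S_{2π} and z ∈ ℂ \ (σ(H_{θ₀,θ_R}) ∪ σ(H_{θ₀',θ_R'})). Then the boundary data maps compose: Λ_{θ₀',θ_R'}^{θ₀'',θ_R''}(z) · Λ_{θ₀,θ_R}^{θ₀',θ_R'}(z) = Λ_{θ₀,θ_R}^{θ₀'',θ_R''}(z). -/
open MeasureTheory Set Complex Filter Matrix
open scoped Classical

noncomputable section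

/-- The strip `S_{2π} = {z ∈ ℂ | 0 ≤ Re z < 2π}`. -/
def S2pi : Set ℂ := {z : ℂ | 0 ≤ z.re ∧ z.re < 2 * Real.pi}

/-- `u` (with derivative `u'`) solves the inhomogeneous Schrödinger equation
`-u'' + V u - z u = f` on `[0,R]`: `u` is differentiable with derivative `u'`
on `[0,R]`, and `u'` is absolutely continuous with `u'' = (V - z) u - f` (a.e.),
encoded in integrated form. -/
def IsSolInhom (R : ℝ) (V : ℝ → ℂ) (z : ℂ) (f u u' : ℝ → ℂ) : Prop :=
  (∀ x ∈ Icc (0:ℝ) R, HasDerivAt u (u' x) x) ∧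
  (∀ x ∈ Icc (0:ℝ) R, u' x = u' 0 + ∫ t in (0:ℝ)..x, ((V t - z) * u t - f t))

/-- `u` (with derivative `u'`) solves the homogeneous equation `-u'' + V u = z u`
on `[0,R]`. -/
def IsSol (R : ℝ) (V : ℝ → ℂ) (z : ℂ) (u u' : ℝ → ℂ) : Prop :=
  IsSolInhom R V z 0 u u'

/-- The boundary trace map `γ_{θ₀,θ_R}(u) ∈ ℂ²`. -/
def bTrace (R : ℝ) (θ0 θR : ℂ) (u u' : ℝ → ℂ) : Fin 2 → ℂ :=
  ![Complex.cos θ0 * u 0 + Complex.sin θ0 * u' 0,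
    Complex.cos θR * u R - Complex.sin θR * u' R]

/-- `z` is an eigenvalue of the Schrödinger operator `H_{θ₀,θ_R}` in `L²((0,R))`.
Since `H_{θ₀,θ_R}` has purely discrete spectrum, the spectrum `σ(H_{θ₀,θ_R})`
coincides with the set of its eigenvalues. -/
def IsEigenvalue (R : ℝ) (V : ℝ → ℂ) (θ0 θR z : ℂ) : Prop :=
  ∃ u u' : ℝ → ℂ, IsSol R V z u u' ∧ bTrace R θ0 θR u u' = 0 ∧
    ∃ x ∈ Icc (0:ℝ) R, u x ≠ 0

/-- The boundary data map `Λ_{θ₀,θ_R}^{θ₀',θ_R'}(z) : ℂ² → ℂ²`: it sends the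
`(θ₀,θ_R)`-boundary data of a solution of `-u'' + V u = z u` to its
`(θ₀',θ_R')`-boundary data.  (It is defined via a choice of solution; for
`z ∉ σ(H_{θ₀,θ_R})` the solution exists and is unique, so the map is well
defined there.) -/
def lambdaMap (R : ℝ) (V : ℝ → ℂ) (θ0 θR θ0' θR' z : ℂ) (c : Fin 2 → ℂ) :
    Fin 2 → ℂ :=
  if h : ∃ u : (ℝ → ℂ) × (ℝ → ℂ), IsSol R V z u.1 u.2 ∧ bTrace R θ0 θR u.1 u.2 = c then
    bTrace R θ0' θR' h.choose.1 h.choose.2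
  else 0

/-- The boundary data map `Λ_{θ₀,θ_R}^{θ₀',θ_R'}(z)` as a `2 × 2` complex matrix. -/
def lambdaMat (R : ℝ) (V : ℝ → ℂ) (θ0 θR θ0' θR' z : ℂ) :
    Matrix (Fin 2) (Fin 2) ℂ :=
  Matrix.of fun i j => lambdaMap R V θ0 θR θ0' θR' z (Pi.single j 1) i

/-- The diagonal matrix `S_{α,β} = diag(sin α, sin β)`. -/
def Smat (α β : ℂ) : Matrix (Fin 2) (Fin 2) ℂ :=
  Matrix.diagonal ![Complex.sin α, Complex.sin β]

end

/-!
For `z` not an eigenvalue of `H_{θ₀,θ_R}`, a solution of `-u'' + V u = z u` with vanishing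
`(θ₀,θ_R)`-boundary data vanishes on `[0,R]`, so the trace map `γ_{θ₀,θ_R}` is injective,
hence bijective, on the two-dimensional solution space. Thus `Λ_{θ₀,θ_R}^{θ₀',θ_R'}(z)` is
the linear map `γ_{θ₀,θ_R}(u) ↦ γ_{θ₀',θ_R'}(u)`, and composing two such maps follows one and
the same solution `u`.

The solution space is two-dimensional because the initial value problem for `u'' = q u` is
solvable for integrable `q`: the operator `w ↦ a + ∫₀ˣ (b + ∫₀ˢ q w)` on `C([0,R])` has a
contracting iterate, its `n`-th iterate being Lipschitz with constant `(R ∫₀ᴿ |q|)ⁿ / n!`.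
-/

open intervalIntegral Nat Function

theorem integral_mul_primitive_pow_le {f : ℝ → ℝ} {a b : ℝ} (hab : a ≤ b)
    (hf : IntervalIntegrable f volume a b) (hf₀ : ∀ x ∈ Icc a b, 0 ≤ f x) (n : ℕ) :
    ∫ x in a..b, f x * (∫ t in a..x, f t) ^ n ≤ (∫ t in a..b, f t) ^ (n + 1) / (n + 1) := by
  set F : ℝ → ℝ := fun x => ∫ t in a..x, f t
  set G : ℝ → ℝ := fun x => F x ^ (n + 1) / (n + 1)
  have hf_on : ∀ x ∈ Icc a b, IntervalIntegrable f volume a x := fun x hx =>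
    hf.mono_set (uIcc_subset_uIcc left_mem_uIcc (by rwa [uIcc_of_le hab]))
  have hF_mono : MonotoneOn F (Icc a b) := fun x hx y hy hxy => by
    have hFxy : F y - F x = ∫ t in x..y, f t :=
      integral_interval_sub_left (hf_on y hy) (hf_on x hx)
    have : 0 ≤ ∫ t in x..y, f t :=
      integral_nonneg hxy fun t ht => hf₀ t ⟨hx.1.trans ht.1, ht.2.trans hy.2⟩
    linarith
  have hG_mono : MonotoneOn G (uIcc a b) := by
    rw [uIcc_of_le hab]
    intro x hx y hy hxy
    have hFx : 0 ≤ F x := by simpa [F] using hF_mono ⟨le_rfl, hab⟩ hx hx.1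
    simp only [G]
    gcongr
    exact hF_mono hx hy hxy
  have hderiv : ∀ᵐ x, x ∈ uIoc a b → f x * F x ^ n = deriv G x := by
    filter_upwards [hf.ae_hasDerivAt_integral] with x hx hxI
    have hF := hx (uIoc_subset_uIcc hxI) a left_mem_uIcc
    have hG : HasDerivAt G ((n + 1 : ℕ) * F x ^ n * f x / (n + 1)) x := by
      simpa using (hF.fun_pow (n + 1)).div_const ((n : ℝ) + 1)
    rw [hG.deriv]
    push_cast
    field_simp
  calc ∫ x in a..b, f x * F x ^ n = ∫ x in a..b, deriv G x := integral_congr_ae hderiv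
    _ ≤ G b - G a := (hG_mono.intervalIntegral_deriv_mem_uIcc).2.trans
          (max_le_iff.2 ⟨sub_nonneg.2 (hG_mono left_mem_uIcc right_mem_uIcc hab), le_rfl⟩)
    _ = F b ^ (n + 1) / (n + 1) := by simp [G, F]

section Picard

variable {q : ℝ → ℂ} {a b : ℂ}

noncomputable def picardOp (q : ℝ → ℂ) (a b : ℂ) (w : ℝ → ℂ) (x : ℝ) : ℂ :=
  a + ∫ s in 0..x, (b + ∫ t in 0..s, q t * w t)

theorem continuous_add_intervalIntegral_mul (hq : Integrable q) {w : ℝ → ℂ} (hw : Continuous w) :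
    Continuous fun s => b + ∫ t in 0..s, q t * w t :=
  (continuous_primitive (fun _ _ => hq.intervalIntegrable.mul_continuousOn hw.continuousOn)
    0).const_add b

theorem hasDerivAt_picardOp (hq : Integrable q) {w : ℝ → ℂ} (hw : Continuous w) (x : ℝ) :
    HasDerivAt (picardOp q a b w) (b + ∫ t in 0..x, q t * w t) x :=
  ((continuous_add_intervalIntegral_mul hq hw).integral_hasStrictDerivAt 0 x).hasDerivAt
    |>.const_add a

theorem continuous_picardOp (hq : Integrable q) {w : ℝ → ℂ} (hw : Continuous w) :
    Continuous (picardOp q a b w) :=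
  continuous_iff_continuousAt.2 fun x => (hasDerivAt_picardOp (b := b) hq hw x).continuousAt

theorem norm_picardOp_sub_le (hq : Integrable q) {w₁ w₂ : ℝ → ℂ} (hw₁ : Continuous w₁)
    (hw₂ : Continuous w₂) {x : ℝ} (hx : 0 ≤ x) :
    ‖picardOp q a b w₁ x - picardOp q a b w₂ x‖ ≤
      x * ∫ t in 0..x, ‖q t‖ * ‖w₁ t - w₂ t‖ := by
  have hdiff : picardOp q a b w₁ x - picardOp q a b w₂ x =
      ∫ s in 0..x, ∫ t in 0..s, q t * (w₁ t - w₂ t) := by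
    simp only [picardOp, mul_sub]
    rw [add_sub_add_left_eq_sub, ← integral_sub
      ((continuous_add_intervalIntegral_mul hq hw₁).intervalIntegrable _ _)
      ((continuous_add_intervalIntegral_mul hq hw₂).intervalIntegrable _ _)]
    congr 1 with s
    rw [integral_sub (hq.intervalIntegrable.mul_continuousOn hw₁.continuousOn)
      (hq.intervalIntegrable.mul_continuousOn hw₂.continuousOn)]
    ring
  have hnorm : IntervalIntegrable (fun t => ‖q t‖ * ‖w₁ t - w₂ t‖) volume 0 x := by
    simpa only [norm_mul, Pi.sub_apply] using
      (hq.intervalIntegrable.mul_continuousOn (hw₁.sub hw₂).continuousOn).norm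
  have hinner : ∀ s ∈ uIoc 0 x, ‖∫ t in 0..s, q t * (w₁ t - w₂ t)‖ ≤
      ∫ t in 0..x, ‖q t‖ * ‖w₁ t - w₂ t‖ := fun s hs => by
    rw [uIoc_of_le hx] at hs
    calc ‖∫ t in 0..s, q t * (w₁ t - w₂ t)‖ ≤ ∫ t in 0..s, ‖q t * (w₁ t - w₂ t)‖ :=
          norm_integral_le_integral_norm hs.1.le
      _ ≤ ∫ t in 0..x, ‖q t‖ * ‖w₁ t - w₂ t‖ := by
          simp only [norm_mul]
          exact integral_mono_interval le_rfl hs.1.le hs.2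
            (Eventually.of_forall fun t => by positivity) hnorm
  rw [hdiff]
  calc _ ≤ (∫ t in 0..x, ‖q t‖ * ‖w₁ t - w₂ t‖) * |x - 0| :=
        norm_integral_le_of_norm_le_const hinner
    _ = _ := by rw [sub_zero, abs_of_nonneg hx, mul_comm]

variable {R : ℝ}

noncomputable def picardCM (hq : Integrable q) (hR : 0 ≤ R) (a b : ℂ) (w : C(Icc 0 R, ℂ)) :
    C(Icc 0 R, ℂ) :=
  ContinuousMap.restrict (Icc 0 R)
    ⟨picardOp q a b (ContinuousMap.IccExtend hR w), continuous_picardOp hq (map_continuous _)⟩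

theorem norm_picardCM_iterate_sub_le (hq : Integrable q) (hR : 0 ≤ R) (n : ℕ)
    (w₁ w₂ : C(Icc 0 R, ℂ)) (x : Icc 0 R) :
    ‖(picardCM hq hR a b)^[n] w₁ x - (picardCM hq hR a b)^[n] w₂ x‖ ≤
      (R * ∫ t in 0..x, ‖q t‖) ^ n / n ! * dist w₁ w₂ := by
  induction n generalizing x with
  | zero => simpa [← dist_eq_norm] using ContinuousMap.dist_apply_le_dist x
  | succ n ih =>
    obtain ⟨x, hx⟩ := x
    set D := dist w₁ w₂
    set Q : ℝ → ℝ := fun y => ∫ t in 0..y, ‖q t‖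
    set v₁ := ContinuousMap.IccExtend hR ((picardCM hq hR a b)^[n] w₁)
    set v₂ := ContinuousMap.IccExtend hR ((picardCM hq hR a b)^[n] w₂)
    have hQ : IntervalIntegrable (fun t => ‖q t‖) volume 0 x := hq.norm.intervalIntegrable
    have hpoint : ∀ t ∈ Icc 0 x, ‖q t‖ * ‖v₁ t - v₂ t‖ ≤
        R ^ n / n ! * D * (‖q t‖ * Q t ^ n) := fun t ht => by
      have htR : t ∈ Icc 0 R := ⟨ht.1, ht.2.trans hx.2⟩
      simp only [v₁, v₂, ContinuousMap.coe_IccExtend, IccExtend_of_mem hR _ htR]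
      calc _ ≤ ‖q t‖ * ((R * Q t) ^ n / n ! * D) := by gcongr; exact ih ⟨t, htR⟩
        _ = _ := by ring
    rw [iterate_succ_apply', iterate_succ_apply']
    have hQ_cont : Continuous Q := continuous_primitive (fun _ _ => hq.norm.intervalIntegrable) 0
    calc _ ≤ x * ∫ t in 0..x, ‖q t‖ * ‖v₁ t - v₂ t‖ :=
          norm_picardOp_sub_le hq (map_continuous _) (map_continuous _) hx.1
      _ ≤ R * (R ^ n / n ! * D * ∫ t in 0..x, ‖q t‖ * Q t ^ n) := by
          rw [← intervalIntegral.integral_const_mul (R ^ n / n ! * D)]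
          refine mul_le_mul hx.2 (integral_mono_on hx.1 ?_ ?_ hpoint)
            (integral_nonneg hx.1 fun t _ => by positivity) hR
          · exact hQ.mul_continuousOn (by fun_prop)
          · exact (hQ.mul_continuousOn (hQ_cont.pow n).continuousOn).const_mul _
      _ ≤ R * (R ^ n / n ! * D * (Q x ^ (n + 1) / (n + 1))) := by
          gcongr
          exact integral_mul_primitive_pow_le hx.1 hQ (fun _ _ => norm_nonneg _) n
      _ = (R * Q x) ^ (n + 1) / (n + 1) ! * D := by
          rw [Nat.factorial_succ]
          push_cast
          field_simp
          ring

theorem exists_isFixedPt_picardCM (hq : Integrable q) (hR : 0 ≤ R) (a b : ℂ) :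
    ∃ w, IsFixedPt (picardCM hq hR a b) w := by
  set L := R * ∫ t in 0..R, ‖q t‖
  have hL : 0 ≤ L := mul_nonneg hR (integral_nonneg hR fun _ _ => norm_nonneg _)
  obtain ⟨n, hn⟩ : ∃ n : ℕ, L ^ n / n ! < 1 :=
    ((FloorSemiring.tendsto_pow_div_factorial_atTop L).eventually (gt_mem_nhds one_pos)).exists
  have hlip : ∀ w₁ w₂, dist ((picardCM hq hR a b)^[n] w₁) ((picardCM hq hR a b)^[n] w₂) ≤
      L ^ n / n ! * dist w₁ w₂ := fun w₁ w₂ => by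
    refine (ContinuousMap.dist_le (by positivity)).2 fun x => ?_
    rw [dist_eq_norm]
    refine (norm_picardCM_iterate_sub_le hq hR n w₁ w₂ x).trans ?_
    gcongr
    · exact mul_nonneg hR (integral_nonneg x.2.1 fun _ _ => norm_nonneg _)
    · exact mul_le_mul_of_nonneg_left (integral_mono_interval le_rfl x.2.1 x.2.2
        (Eventually.of_forall fun _ => norm_nonneg _) hq.norm.intervalIntegrable) hR
  have hcontr : ContractingWith ⟨L ^ n / n !, by positivity⟩ (picardCM hq hR a b)^[n] :=
    ⟨hn, LipschitzWith.of_dist_le_mul hlip⟩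
  exact ⟨_, hcontr.isFixedPt_fixedPoint_iterate⟩

theorem exists_hasDerivAt_eq_add_integral_mul (hq : Integrable q) (hR : 0 ≤ R) (a b : ℂ) :
    ∃ u u' : ℝ → ℂ, u 0 = a ∧ u' 0 = b ∧ (∀ x, HasDerivAt u (u' x) x) ∧
      ∀ x ∈ Icc 0 R, u' x = b + ∫ t in 0..x, q t * u t := by
  obtain ⟨w, hw⟩ := exists_isFixedPt_picardCM hq hR a b
  set w' := ContinuousMap.IccExtend hR w
  refine ⟨picardOp q a b w', fun x => b + ∫ t in 0..x, q t * w' t, by simp [picardOp], by simp,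
    hasDerivAt_picardOp hq (map_continuous _), fun x hx => ?_⟩
  refine congrArg (b + ·) (integral_congr fun t ht => ?_)
  rw [uIcc_of_le hx.1] at ht
  have htR : t ∈ Icc 0 R := ⟨ht.1, ht.2.trans hx.2⟩
  have : w' t = picardOp q a b w' t := by
    conv_lhs => rw [ContinuousMap.coe_IccExtend, IccExtend_of_mem hR _ htR, ← hw]
    rfl
  simp only [this]

end Picard

section Schrodinger

open Topology

variable {R : ℝ} {V : ℝ → ℂ} {z θ0 θR : ℂ} {u u' v v' : ℝ → ℂ}

theorem isSol_iff : IsSol R V z u u' ↔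
    (∀ x ∈ Icc 0 R, HasDerivAt u (u' x) x) ∧
      ∀ x ∈ Icc 0 R, u' x = u' 0 + ∫ t in 0..x, (V t - z) * u t := by
  simp [IsSol, IsSolInhom]

theorem exists_isSol (hR : 0 ≤ R) (hV : IntegrableOn V (Ioo 0 R)) (a b : ℂ) :
    ∃ u u', IsSol R V z u u' ∧ u 0 = a ∧ u' 0 = b := by
  -- extending `V - z` by zero makes the solution differentiable at the endpoints `0` and `R` too
  have hq : Integrable ((Icc 0 R).indicator fun t => V t - z) :=
    (integrable_indicator_iff measurableSet_Icc).2
      (((integrableOn_Icc_iff_integrableOn_Ioo (by simp) (by simp)).2 hV).sub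
        (integrableOn_const (by simp)))
  obtain ⟨u, u', hu0, hu'0, hderiv, hint⟩ := exists_hasDerivAt_eq_add_integral_mul hq hR a b
  refine ⟨u, u', isSol_iff.2 ⟨fun x _ => hderiv x, fun x hx => ?_⟩, hu0, hu'0⟩
  rw [hint x hx, hu'0]
  refine congrArg (b + ·) (integral_congr fun t ht => ?_)
  rw [uIcc_of_le hx.1] at ht
  simp only [indicator_of_mem (show t ∈ Icc 0 R from ⟨ht.1, ht.2.trans hx.2⟩)]

theorem IsSol.intervalIntegrable (hV : IntegrableOn V (Ioo 0 R)) (hu : IsSol R V z u u') {x : ℝ}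
    (hx : x ∈ Icc 0 R) : IntervalIntegrable (fun t => (V t - z) * u t) volume 0 x := by
  have hVx : IntervalIntegrable V volume 0 x :=
    (intervalIntegrable_iff_integrableOn_Ioo_of_le hx.1 (by simp) (by simp)).2
      (hV.mono_set (Ioo_subset_Ioo_right hx.2))
  refine (hVx.sub intervalIntegrable_const).mul_continuousOn fun t ht => ?_
  rw [uIcc_of_le hx.1] at ht
  exact (hu.1 t ⟨ht.1, ht.2.trans hx.2⟩).continuousAt.continuousWithinAt

theorem IsSol.add (hV : IntegrableOn V (Ioo 0 R)) (hu : IsSol R V z u u')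
    (hv : IsSol R V z v v') :
    IsSol R V z (u + v) (u' + v') := by
  refine isSol_iff.2 ⟨fun x hx => (hu.1 x hx).add (hv.1 x hx), fun x hx => ?_⟩
  simp only [Pi.add_apply, mul_add]
  rw [integral_add (hu.intervalIntegrable hV hx) (hv.intervalIntegrable hV hx),
    (isSol_iff.1 hu).2 x hx, (isSol_iff.1 hv).2 x hx]
  ring

theorem IsSol.const_smul (c : ℂ) (hu : IsSol R V z u u') : IsSol R V z (c • u) (c • u') := by
  refine isSol_iff.2 ⟨fun x hx => (hu.1 x hx).const_mul c, fun x hx => ?_⟩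
  simp only [Pi.smul_apply, smul_eq_mul, mul_left_comm _ c, intervalIntegral.integral_const_mul,
    (isSol_iff.1 hu).2 x hx]
  ring

theorem IsSol.sub (hV : IntegrableOn V (Ioo 0 R)) (hu : IsSol R V z u u')
    (hv : IsSol R V z v v') :
    IsSol R V z (u - v) (u' - v') := by
  simpa [sub_eq_add_neg] using hu.add hV (hv.const_smul (-1))

theorem bTrace_add :
    bTrace R θ0 θR (u + v) (u' + v') = bTrace R θ0 θR u u' + bTrace R θ0 θR v v' := by
  ext i; fin_cases i <;> simp [bTrace] <;> ring

theorem bTrace_smul (c : ℂ) : bTrace R θ0 θR (c • u) (c • u') = c • bTrace R θ0 θR u u' := by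
  ext i; fin_cases i <;> simp [bTrace] <;> ring

theorem bTrace_sub :
    bTrace R θ0 θR (u - v) (u' - v') = bTrace R θ0 θR u u' - bTrace R θ0 θR v v' := by
  ext i; fin_cases i <;> simp [bTrace] <;> ring

theorem IsSol.eq_zero_of_bTrace_eq_zero (hR : 0 < R) (hz : ¬ IsEigenvalue R V θ0 θR z)
    (hu : IsSol R V z u u') (h : bTrace R θ0 θR u u' = 0) :
    u 0 = 0 ∧ u' 0 = 0 ∧ u R = 0 ∧ u' R = 0 := by
  have hu_zero : ∀ x ∈ Icc 0 R, u x = 0 := by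
    by_contra! hne
    exact hz ⟨u, u', hu, h, hne⟩
  have hu'_const : ∀ x ∈ Icc 0 R, u' x = u' 0 := fun x hx => by
    rw [(isSol_iff.1 hu).2 x hx, add_eq_left]
    refine (integral_congr fun t ht => ?_).trans integral_zero
    rw [uIcc_of_le hx.1] at ht
    simp [hu_zero t ⟨ht.1, ht.2.trans hx.2⟩]
  have hmid : R / 2 ∈ Icc 0 R := ⟨by linarith, by linarith⟩
  -- `u` need not vanish outside `[0, R]`, so `u' = 0` is read off at an interior point
  have hu'_mid : u' (R / 2) = 0 := by
    have hloc : u =ᶠ[𝓝 (R / 2)] fun _ => 0 :=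
      eventually_of_mem (Ioo_mem_nhds (by linarith) (by linarith)) fun y hy =>
        hu_zero y ⟨hy.1.le, hy.2.le⟩
    exact ((hu.1 _ hmid).congr_of_eventuallyEq hloc.symm).unique (hasDerivAt_const _ _)
  have hu'0 : u' 0 = 0 := by rw [← hu'_const _ hmid, hu'_mid]
  exact ⟨hu_zero 0 ⟨le_rfl, hR.le⟩, hu'0, hu_zero R ⟨hR.le, le_rfl⟩,
    (hu'_const R ⟨hR.le, le_rfl⟩).trans hu'0⟩

theorem IsSol.bTrace_eq_of_bTrace_eq (hR : 0 < R) (hV : IntegrableOn V (Ioo 0 R))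
    (hz : ¬ IsEigenvalue R V θ0 θR z) (hu : IsSol R V z u u') (hv : IsSol R V z v v')
    (h : bTrace R θ0 θR u u' = bTrace R θ0 θR v v') (θa θb : ℂ) :
    bTrace R θa θb u u' = bTrace R θa θb v v' := by
  obtain ⟨h0, h0', h1, h1'⟩ :=
    (hu.sub hV hv).eq_zero_of_bTrace_eq_zero hR hz (by rw [bTrace_sub, h, sub_self])
  rw [← sub_eq_zero, ← bTrace_sub]
  ext i
  fin_cases i <;> simp [bTrace, h0, h0', h1, h1']

theorem exists_isSol_bTrace_eq (hR : 0 < R) (hV : IntegrableOn V (Ioo 0 R))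
    (hz : ¬ IsEigenvalue R V θ0 θR z) (c : Fin 2 → ℂ) :
    ∃ u u', IsSol R V z u u' ∧ bTrace R θ0 θR u u' = c := by
  obtain ⟨p, p', hp, hp0, hp'0⟩ := exists_isSol (z := z) hR.le hV 1 0
  obtain ⟨r, r', hr, hr0, hr'0⟩ := exists_isSol (z := z) hR.le hV 0 1
  have hcomb : ∀ s t : ℂ, IsSol R V z (s • p + t • r) (s • p' + t • r') := fun s t =>
    (hp.const_smul s).add hV (hr.const_smul t)
  have htrace : ∀ s t : ℂ, bTrace R θ0 θR (s • p + t • r) (s • p' + t • r') =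
      s • bTrace R θ0 θR p p' + t • bTrace R θ0 θR r r' := fun s t => by
    rw [bTrace_add, bTrace_smul, bTrace_smul]
  have hli : LinearIndependent ℂ ![bTrace R θ0 θR p p', bTrace R θ0 θR r r'] :=
    LinearIndependent.pair_iff.2 fun s t hst => by
      obtain ⟨h0, h0', -, -⟩ := (hcomb s t).eq_zero_of_bTrace_eq_zero hR hz (by rw [htrace, hst])
      simpa [hp0, hp'0, hr0, hr'0] using And.intro h0 h0'
  have hc : c ∈ Submodule.span ℂ {bTrace R θ0 θR p p', bTrace R θ0 θR r r'} := by
    have hspan := hli.span_eq_top_of_card_eq_finrank (by simp)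
    rw [Matrix.range_cons, Matrix.range_cons, Matrix.range_empty, union_empty,
      singleton_union] at hspan
    exact hspan ▸ Submodule.mem_top
  obtain ⟨s, t, hst⟩ := Submodule.mem_span_pair.1 hc
  exact ⟨_, _, hcomb s t, (htrace s t).trans hst⟩

theorem lambdaMap_bTrace (hR : 0 < R) (hV : IntegrableOn V (Ioo 0 R))
    (hz : ¬ IsEigenvalue R V θ0 θR z) (hu : IsSol R V z u u') (θa θb : ℂ) :
    lambdaMap R V θ0 θR θa θb z (bTrace R θ0 θR u u') = bTrace R θa θb u u' := by
  have hex : ∃ p : (ℝ → ℂ) × (ℝ → ℂ), IsSol R V z p.1 p.2 ∧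
      bTrace R θ0 θR p.1 p.2 = bTrace R θ0 θR u u' := ⟨(u, u'), hu, rfl⟩
  rw [lambdaMap, dif_pos hex]
  exact hex.choose_spec.1.bTrace_eq_of_bTrace_eq hR hV hz hu hex.choose_spec.2 θa θb

theorem isLinearMap_lambdaMap (hR : 0 < R) (hV : IntegrableOn V (Ioo 0 R))
    (hz : ¬ IsEigenvalue R V θ0 θR z) (θa θb : ℂ) :
    IsLinearMap ℂ (lambdaMap R V θ0 θR θa θb z) := by
  constructor
  · intro c d
    obtain ⟨u, u', hu, rfl⟩ := exists_isSol_bTrace_eq hR hV hz c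
    obtain ⟨v, v', hv, rfl⟩ := exists_isSol_bTrace_eq hR hV hz d
    rw [← bTrace_add, lambdaMap_bTrace hR hV hz (hu.add hV hv), lambdaMap_bTrace hR hV hz hu,
      lambdaMap_bTrace hR hV hz hv, bTrace_add]
  · intro k c
    obtain ⟨u, u', hu, rfl⟩ := exists_isSol_bTrace_eq hR hV hz c
    rw [← bTrace_smul, lambdaMap_bTrace hR hV hz (hu.const_smul k), lambdaMap_bTrace hR hV hz hu,
      bTrace_smul]

theorem lambdaMat_eq_toMatrix' (hR : 0 < R) (hV : IntegrableOn V (Ioo 0 R))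
    (hz : ¬ IsEigenvalue R V θ0 θR z) (θa θb : ℂ) :
    lambdaMat R V θ0 θR θa θb z =
      LinearMap.toMatrix' (IsLinearMap.mk' _ (isLinearMap_lambdaMap hR hV hz θa θb)) := by
  ext i j
  rw [LinearMap.toMatrix'_apply]
  rfl

theorem lambdaMap_lambdaMap {θ0' θR' : ℂ} (hR : 0 < R) (hV : IntegrableOn V (Ioo 0 R))
    (hz : ¬ IsEigenvalue R V θ0 θR z) (hz' : ¬ IsEigenvalue R V θ0' θR' z) (θa θb : ℂ)
    (c : Fin 2 → ℂ) :
    lambdaMap R V θ0' θR' θa θb z (lambdaMap R V θ0 θR θ0' θR' z c) =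
      lambdaMap R V θ0 θR θa θb z c := by
  obtain ⟨u, u', hu, rfl⟩ := exists_isSol_bTrace_eq hR hV hz c
  rw [lambdaMap_bTrace hR hV hz hu, lambdaMap_bTrace hR hV hz' hu, lambdaMap_bTrace hR hV hz hu]

end Schrodinger

theorem lambda_composition_general
    (R : ℝ) (hR : 0 < R) (V : ℝ → ℂ) (hV : IntegrableOn V (Ioo 0 R))
    (θ0 θR θ0' θR' θ0'' θR'' : ℂ)
    (z : ℂ) (hz : ¬ IsEigenvalue R V θ0 θR z) (hz' : ¬ IsEigenvalue R V θ0' θR' z) :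
    lambdaMat R V θ0' θR' θ0'' θR'' z * lambdaMat R V θ0 θR θ0' θR' z =
      lambdaMat R V θ0 θR θ0'' θR'' z := by
  rw [lambdaMat_eq_toMatrix' hR hV hz', lambdaMat_eq_toMatrix' hR hV hz,
    lambdaMat_eq_toMatrix' hR hV hz, ← LinearMap.toMatrix'_comp]
  exact congrArg _ (LinearMap.ext (lambdaMap_lambdaMap hR hV hz hz' θ0'' θR''))

/-- For `θ₀, θ_R, θ₀', θ_R', θ₀'', θ_R'' ∈ S_{2π}` and
`z ∈ ℂ \ (σ(H_{θ₀,θ_R}) ∪ σ(H_{θ₀',θ_R'}))`, the boundary data maps compose: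
`Λ_{θ₀',θ_R'}^{θ₀'',θ_R''}(z) · Λ_{θ₀,θ_R}^{θ₀',θ_R'}(z) = Λ_{θ₀,θ_R}^{θ₀'',θ_R''}(z)`. -/
theorem lambda_composition
    (R : ℝ) (hR : 0 < R) (V : ℝ → ℂ) (hV : IntegrableOn V (Ioo 0 R))
    (θ0 θR θ0' θR' θ0'' θR'' : ℂ)
    (hθ0 : θ0 ∈ S2pi) (hθR : θR ∈ S2pi) (hθ0' : θ0' ∈ S2pi) (hθR' : θR' ∈ S2pi)
    (hθ0'' : θ0'' ∈ S2pi) (hθR'' : θR'' ∈ S2pi)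
    (z : ℂ) (hz : ¬ IsEigenvalue R V θ0 θR z) (hz' : ¬ IsEigenvalue R V θ0' θR' z) :
    lambdaMat R V θ0' θR' θ0'' θR'' z * lambdaMat R V θ0 θR θ0' θR' z =
      lambdaMat R V θ0 θR θ0'' θR'' z :=
  lambda_composition_general R hR V hV θ0 θR θ0' θR' θ0'' θR'' z hz hz'
end

section
/- Let θ₀, θ_R ∈ S_{2π} and z ∈ ℂ \ σ(H_{θ₀,θ_R}). Then the Wronskian W(z) = W(u_{+,θ_R}(z,·), u_{−,θ₀}(z,·)) satisfies the two factorizations: [−sin(θ₀)u_{−,θ₀}(z,0) + cos(θ₀)u'_{−,θ₀}(z,0)]·[cos(θ₀) + sin(θ₀)u'_{+,θ_R}(z,0)] = W(z) = [cos(θ_R) − sin(θ_R)u'_{−,θ₀}(z,R)]·[−sin(θ_R)u_{+,θ_R}(z,R) − cos(θ_R)u'_{+,θ_R}(z,R)], and W(z) ≠ 0. -/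
open MeasureTheory Set Complex Filter Matrix
open scoped Classical

/-!
The Wronskian `W = u₊ u₋' - u₊' u₋` of two solutions is absolutely continuous with a.e.
derivative `u₊ (V - z) u₋ - (V - z) u₊ u₋ = 0`, hence constant. The two factorizations are
algebraic consequences of the boundary conditions and `sin² + cos² = 1`. If `W = 0`, one of the
factors at `0` vanishes: either `u₊` also satisfies the `θ₀`-condition, so `z` is an eigenvalue,
or the Cauchy data of `u₋` at `0` vanish, and then `u₋ ≡ 0`, contradicting `u₋(R) = 1`.
Uniqueness for the initial value problem is a continuation argument: to the right of a point `x`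
where `u` and `u'` vanish, `‖u‖ + ‖u'‖` is at most its own maximum on `[x, b]` times
`(b - x) + ∫ₓᵇ |V - z|`, which is `< 1/2` for `b` close to `x`.
-/

open intervalIntegral Topology

theorem absolutelyContinuousOnInterval_of_sub_eq_integral {E : Type*} [NormedAddCommGroup E]
    [NormedSpace ℝ E] {f g : ℝ → E} {a b : ℝ} (hg : IntervalIntegrable g volume a b)
    (hfg : ∀ s ∈ uIcc a b, ∀ t ∈ uIcc a b, f t - f s = ∫ x in s..t, g x) :
    AbsolutelyContinuousOnInterval f a b := by
  refine squeeze_zero' (Eventually.of_forall fun _ => Finset.sum_nonneg fun _ _ => dist_nonneg)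
    ?_ (hg.norm.absolutelyContinuousOnInterval_intervalIntegral left_mem_uIcc)
  filter_upwards [mem_inf_of_right (mem_principal_self _)] with I hI
  refine Finset.sum_le_sum fun i hi => ?_
  obtain ⟨hs, ht⟩ := hI.1 i hi
  have hgn : ∀ {c}, c ∈ uIcc a b → IntervalIntegrable (fun x => ‖g x‖) volume a c :=
    fun hc => hg.norm.mono_set (uIcc_subset_uIcc left_mem_uIcc hc)
  calc dist (f (I.2 i).1) (f (I.2 i).2) = ‖∫ x in (I.2 i).1..(I.2 i).2, g x‖ := by
        rw [dist_comm, dist_eq_norm, hfg _ hs _ ht]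
    _ ≤ |∫ x in (I.2 i).1..(I.2 i).2, ‖g x‖| := norm_integral_le_abs_integral_norm
    _ = _ := by rw [dist_comm, Real.dist_eq, integral_interval_sub_left (hgn ht) (hgn hs)]

variable {R : ℝ} {V : ℝ → ℂ} {z : ℂ} {u u' : ℝ → ℂ}

theorem intervalIntegrable_potential_sub (hR : 0 ≤ R) (hV : IntegrableOn V (Ioo 0 R)) :
    IntervalIntegrable (fun t => V t - z) volume 0 R :=
  (intervalIntegrable_iff_integrableOn_Ioo_of_le hR).2
    (hV.sub (integrableOn_const measure_Ioo_lt_top.ne))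

namespace IsSol

theorem continuousOn (hu : IsSol R V z u u') : ContinuousOn u (Icc 0 R) :=
  fun x hx => (hu.1 x hx).continuousAt.continuousWithinAt

theorem deriv_eq_add_integral (hu : IsSol R V z u u') {x : ℝ} (hx : x ∈ Icc 0 R) :
    u' x = u' 0 + ∫ t in 0..x, (V t - z) * u t := by
  simpa using hu.2 x hx

theorem intervalIntegrable_potential_mul (hR : 0 ≤ R) (hV : IntegrableOn V (Ioo 0 R))
    (hu : IsSol R V z u u') : IntervalIntegrable (fun t => (V t - z) * u t) volume 0 R :=
  (intervalIntegrable_potential_sub hR hV).mul_continuousOn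
    (by rw [uIcc_of_le hR]; exact hu.continuousOn)

theorem continuousOn_deriv (hR : 0 ≤ R) (hV : IntegrableOn V (Ioo 0 R))
    (hu : IsSol R V z u u') : ContinuousOn u' (Icc 0 R) := by
  have h := continuousOn_primitive_interval'
    (hu.intervalIntegrable_potential_mul hR hV) left_mem_uIcc
  rw [uIcc_of_le hR] at h
  exact (continuousOn_const.add h).congr fun x hx => hu.deriv_eq_add_integral hx

theorem sub_eq_integral_deriv (hR : 0 ≤ R) (hV : IntegrableOn V (Ioo 0 R))
    (hu : IsSol R V z u u') {s t : ℝ} (hs : s ∈ Icc 0 R) (ht : t ∈ Icc 0 R) :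
    u t - u s = ∫ x in s..t, u' x :=
  (integral_eq_sub_of_hasDerivAt (fun x hx => hu.1 x (uIcc_subset_Icc hs ht hx))
    ((hu.continuousOn_deriv hR hV).mono (uIcc_subset_Icc hs ht)).intervalIntegrable).symm

theorem deriv_sub_eq_integral (hR : 0 ≤ R) (hV : IntegrableOn V (Ioo 0 R))
    (hu : IsSol R V z u u') {s t : ℝ} (hs : s ∈ Icc 0 R) (ht : t ∈ Icc 0 R) :
    u' t - u' s = ∫ x in s..t, (V x - z) * u x := by
  have hint : ∀ {c}, c ∈ Icc 0 R →
      IntervalIntegrable (fun x => (V x - z) * u x) volume 0 c := fun hc =>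
    (hu.intervalIntegrable_potential_mul hR hV).mono_set
      (by rw [uIcc_of_le hR]; exact uIcc_subset_Icc (left_mem_Icc.2 hR) hc)
  rw [hu.deriv_eq_add_integral ht, hu.deriv_eq_add_integral hs, add_sub_add_left_eq_sub,
    integral_interval_sub_left (hint ht) (hint hs)]

theorem absolutelyContinuousOnInterval (hR : 0 ≤ R) (hV : IntegrableOn V (Ioo 0 R))
    (hu : IsSol R V z u u') : AbsolutelyContinuousOnInterval u 0 R := by
  refine absolutelyContinuousOnInterval_of_sub_eq_integral (g := u') ?_ ?_
  · exact ((hu.continuousOn_deriv hR hV).mono (uIcc_of_le hR).subset).intervalIntegrable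
  · rw [uIcc_of_le hR]
    exact fun s hs t ht => hu.sub_eq_integral_deriv hR hV hs ht

theorem absolutelyContinuousOnInterval_deriv (hR : 0 ≤ R) (hV : IntegrableOn V (Ioo 0 R))
    (hu : IsSol R V z u u') : AbsolutelyContinuousOnInterval u' 0 R := by
  refine absolutelyContinuousOnInterval_of_sub_eq_integral
    (hu.intervalIntegrable_potential_mul hR hV) ?_
  rw [uIcc_of_le hR]
  exact fun s hs t ht => hu.deriv_sub_eq_integral hR hV hs ht

theorem ae_hasDerivAt_deriv (hR : 0 ≤ R) (hV : IntegrableOn V (Ioo 0 R))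
    (hu : IsSol R V z u u') : ∀ᵐ x, x ∈ Ioo 0 R → HasDerivAt u' ((V x - z) * u x) x := by
  filter_upwards [(hu.intervalIntegrable_potential_mul hR hV).ae_hasDerivAt_integral]
    with x hx hxR
  refine ((hx (uIcc_of_le hR ▸ Ioo_subset_Icc_self hxR) 0 left_mem_uIcc).const_add
    (u' 0)).congr_of_eventuallyEq ?_
  filter_upwards [Ioo_mem_nhds hxR.1 hxR.2] with y hy
  exact hu.deriv_eq_add_integral (Ioo_subset_Icc_self hy)

theorem wronskian_eq {v v' : ℝ → ℂ} (hR : 0 ≤ R) (hV : IntegrableOn V (Ioo 0 R))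
    (hu : IsSol R V z u u') (hv : IsSol R V z v v') {x : ℝ} (hx : x ∈ Icc 0 R) :
    u x * v' x - u' x * v x = u 0 * v' 0 - u' 0 * v 0 := by
  have hW : AbsolutelyContinuousOnInterval (fun x => u x * v' x - u' x * v x) 0 R :=
    ((hu.absolutelyContinuousOnInterval hR hV).fun_smul
      (hv.absolutelyContinuousOnInterval_deriv hR hV)).fun_sub
      ((hu.absolutelyContinuousOnInterval_deriv hR hV).fun_smul
      (hv.absolutelyContinuousOnInterval hR hV))
  have hendpoints : ∀ᵐ x, x ∉ ({0, R} : Set ℝ) := (toFinite _).countable.ae_notMem _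
  obtain ⟨C, hC⟩ := hW.const_of_ae_hasDerivAt_zero <| by
    filter_upwards [hu.ae_hasDerivAt_deriv hR hV, hv.ae_hasDerivAt_deriv hR hV, hendpoints]
      with y hu'y hv'y hy0R hy
    rw [uIcc_of_le hR] at hy
    simp only [mem_insert_iff, mem_singleton_iff, not_or] at hy0R
    have hy : y ∈ Ioo 0 R := ⟨hy.1.lt_of_ne' hy0R.1, hy.2.lt_of_ne hy0R.2⟩
    convert (((hu.1 y (Ioo_subset_Icc_self hy)).fun_mul (hv'y hy)).fun_sub
      ((hu'y hy).fun_mul (hv.1 y (Ioo_subset_Icc_self hy)))) using 1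
    ring
  rw [uIcc_of_le hR] at hC
  rw [hC x hx, hC 0 (left_mem_Icc.2 hR)]

theorem norm_add_norm_deriv_le (hV : IntegrableOn V (Ioo 0 R)) (hu : IsSol R V z u u')
    {x b M : ℝ} (hxb : x ≤ b) (hbR : Icc x b ⊆ Icc 0 R) (h0 : u x = 0) (h0' : u' x = 0)
    (hM : ∀ t ∈ Icc x b, ‖u t‖ + ‖u' t‖ ≤ M) {t : ℝ} (ht : t ∈ Icc x b) :
    ‖u t‖ + ‖u' t‖ ≤ M * ((b - x) + ∫ s in x..b, ‖V s - z‖) := by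
  have hx : x ∈ Icc 0 R := hbR (left_mem_Icc.2 hxb)
  have hR : 0 ≤ R := hx.1.trans hx.2
  have hM0 : 0 ≤ M := (by positivity : (0:ℝ) ≤ ‖u x‖ + ‖u' x‖).trans (hM x (left_mem_Icc.2 hxb))
  have hsub : uIoc x t ⊆ Icc x b := by
    rw [uIoc_of_le ht.1]; exact Ioc_subset_Icc_self.trans (Icc_subset_Icc le_rfl ht.2)
  have hk : IntervalIntegrable (fun s => ‖V s - z‖) volume x b :=
    (intervalIntegrable_potential_sub hR hV).norm.mono_set
      (by rw [uIcc_of_le hR, uIcc_of_le hxb]; exact hbR)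
  have hu_bound : ‖u t‖ ≤ M * (b - x) := by
    rw [← sub_zero (u t), ← h0, hu.sub_eq_integral_deriv hR hV hx (hbR ht)]
    calc ‖∫ s in x..t, u' s‖ ≤ M * |t - x| := norm_integral_le_of_norm_le_const fun s hs =>
          (le_add_of_nonneg_left (norm_nonneg _)).trans (hM s (hsub hs))
      _ ≤ M * (b - x) := by rw [abs_of_nonneg (sub_nonneg.2 ht.1)]; gcongr; exact ht.2
  have hu'_bound : ‖u' t‖ ≤ M * ∫ s in x..b, ‖V s - z‖ := by
    rw [← sub_zero (u' t), ← h0', hu.deriv_sub_eq_integral hR hV hx (hbR ht)]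
    calc ‖∫ s in x..t, (V s - z) * u s‖ ≤ ∫ s in x..t, ‖V s - z‖ * M := by
          refine norm_integral_le_of_norm_le ht.1 (Eventually.of_forall fun s hs => ?_)
            ((hk.mono_set (uIcc_subset_uIcc left_mem_uIcc
              (by rw [uIcc_of_le hxb]; exact ht))).mul_const M)
          rw [norm_mul]
          gcongr
          exact (le_add_of_nonneg_right (norm_nonneg _)).trans
            (hM s (hsub (by rwa [uIoc_of_le ht.1])))
      _ = M * ∫ s in x..t, ‖V s - z‖ := by rw [intervalIntegral.integral_mul_const, mul_comm]
      _ ≤ M * ∫ s in x..b, ‖V s - z‖ := by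
          gcongr
          exact integral_mono_interval le_rfl ht.1 ht.2
            (Eventually.of_forall fun _ => norm_nonneg _) hk
  linarith [mul_add M (b - x) (∫ s in x..b, ‖V s - z‖)]

theorem exists_Ioc_forall_eq_zero (hV : IntegrableOn V (Ioo 0 R)) (hu : IsSol R V z u u')
    {x : ℝ} (hx : x ∈ Ico 0 R) (h0 : u x = 0) (h0' : u' x = 0) :
    ∃ b ∈ Ioc x R, ∀ t ∈ Icc x b, u t = 0 ∧ u' t = 0 := by
  have hR : 0 ≤ R := hx.1.trans hx.2.le
  have hk : IntervalIntegrable (fun s => ‖V s - z‖) volume x R :=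
    (intervalIntegrable_potential_sub hR hV).norm.mono_set (uIcc_subset_uIcc
      (by rw [uIcc_of_le hR]; exact Ico_subset_Icc_self hx) right_mem_uIcc)
  have hsmall : ∀ᶠ b in 𝓝[>] x, (b - x) + ∫ s in x..b, ‖V s - z‖ < 1 / 2 := by
    have hcont : ContinuousWithinAt (fun b => (b - x) + ∫ s in x..b, ‖V s - z‖) (Icc x R) x := by
      have h := continuousOn_primitive_interval' hk left_mem_uIcc x left_mem_uIcc
      rw [uIcc_of_le hx.2.le] at h
      exact (continuousWithinAt_id.sub continuousWithinAt_const).add h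
    rw [← nhdsWithin_Ioc_eq_nhdsGT hx.2]
    exact (hcont.mono Ioc_subset_Icc_self).eventually (gt_mem_nhds (by simp))
  obtain ⟨b, hsmall_b, hb⟩ := (hsmall.and (Ioc_mem_nhdsGT hx.2)).exists
  have hbR : Icc x b ⊆ Icc 0 R := Icc_subset_Icc hx.1 hb.2
  obtain ⟨c, hc, hmax⟩ := isCompact_Icc.exists_isMaxOn (nonempty_Icc.2 hb.1.le)
    ((hu.continuousOn.norm.add (hu.continuousOn_deriv hR hV).norm).mono hbR)
  have hMc : ‖u c‖ + ‖u' c‖ ≤ (‖u c‖ + ‖u' c‖) * ((b - x) + ∫ s in x..b, ‖V s - z‖) :=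
    hu.norm_add_norm_deriv_le hV hb.1.le hbR h0 h0' (fun t ht => hmax ht) hc
  have hM0 : ‖u c‖ + ‖u' c‖ ≤ 0 := by
    nlinarith [norm_nonneg (u c), norm_nonneg (u' c)]
  refine ⟨b, hb, fun t ht => ?_⟩
  have ht0 : ‖u t‖ + ‖u' t‖ ≤ 0 := (hmax ht).trans hM0
  exact ⟨norm_le_zero_iff.1 (by linarith [norm_nonneg (u' t)]),
    norm_le_zero_iff.1 (by linarith [norm_nonneg (u t)])⟩

theorem eq_zero_of_eq_zero_of_deriv_eq_zero (hR : 0 ≤ R) (hV : IntegrableOn V (Ioo 0 R))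
    (hu : IsSol R V z u u') (h0 : u 0 = 0) (h0' : u' 0 = 0) {x : ℝ} (hx : x ∈ Icc 0 R) :
    u x = 0 := by
  have hclosed : IsClosed ({t | u t = 0 ∧ u' t = 0} ∩ Icc 0 R) := by
    have h := (hu.continuousOn.prodMk (hu.continuousOn_deriv hR hV)).preimage_isClosed_of_isClosed
      isClosed_Icc (isClosed_singleton (x := ((0 : ℂ), (0 : ℂ))))
    convert h using 1
    ext t
    simp [and_comm]
  refine (hclosed.Icc_subset_of_forall_mem_nhdsWithin ⟨h0, h0'⟩ ?_ hx).1
  rintro y ⟨⟨hy, hy'⟩, hyR⟩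
  obtain ⟨b, hb, hvanish⟩ := hu.exists_Ioc_forall_eq_zero hV hyR hy hy'
  exact mem_of_superset (Ico_mem_nhdsGT hb.1) fun t ht => hvanish t (Ico_subset_Icc_self ht)

end IsSol

theorem wronskian_factorizations_general
    (R : ℝ) (hR : 0 < R) (V : ℝ → ℂ) (hV : IntegrableOn V (Ioo 0 R))
    (θ0 θR : ℂ)
    (z : ℂ) (hz : ¬ IsEigenvalue R V θ0 θR z)
    (up up' um um' : ℝ → ℂ)
    (hup : IsSol R V z up up') (hup0 : up 0 = 1)
    (hupR : Complex.cos θR * up R - Complex.sin θR * up' R = 0)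
    (hum : IsSol R V z um um') (humR : um R = 1)
    (hum0 : Complex.cos θ0 * um 0 + Complex.sin θ0 * um' 0 = 0) :
    (-Complex.sin θ0 * um 0 + Complex.cos θ0 * um' 0) *
        (Complex.cos θ0 + Complex.sin θ0 * up' 0) =
      up 0 * um' 0 - up' 0 * um 0 ∧
    up 0 * um' 0 - up' 0 * um 0 = up R * um' R - up' R * um R ∧
    (Complex.cos θR - Complex.sin θR * um' R) *
        (-Complex.sin θR * up R - Complex.cos θR * up' R) =
      up R * um' R - up' R * um R ∧
    up 0 * um' 0 - up' 0 * um 0 ≠ 0 := by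
  have hfac0 : (-Complex.sin θ0 * um 0 + Complex.cos θ0 * um' 0) *
      (Complex.cos θ0 + Complex.sin θ0 * up' 0) = up 0 * um' 0 - up' 0 * um 0 := by
    rw [hup0]
    linear_combination (-Complex.sin θ0 + Complex.cos θ0 * up' 0) * hum0 +
      (um' 0 - um 0 * up' 0) * Complex.sin_sq_add_cos_sq θ0
  have hfacR : (Complex.cos θR - Complex.sin θR * um' R) *
      (-Complex.sin θR * up R - Complex.cos θR * up' R) = up R * um' R - up' R * um R := by
    rw [humR]
    linear_combination (-Complex.sin θR - Complex.cos θR * um' R) * hupR +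
      (um' R * up R - up' R) * Complex.sin_sq_add_cos_sq θR
  refine ⟨hfac0, (hup.wronskian_eq hR.le hV hum (right_mem_Icc.2 hR.le)).symm, hfacR,
    fun hW => ?_⟩
  rcases mul_eq_zero.1 (hfac0.trans hW) with hum0' | hup0'
  · have hum_zero : um 0 = 0 := by
      linear_combination Complex.cos θ0 * hum0 - Complex.sin θ0 * hum0' -
        um 0 * Complex.sin_sq_add_cos_sq θ0
    have hum'_zero : um' 0 = 0 := by
      linear_combination Complex.sin θ0 * hum0 + Complex.cos θ0 * hum0' -
        um' 0 * Complex.sin_sq_add_cos_sq θ0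
    simpa [humR] using
      hum.eq_zero_of_eq_zero_of_deriv_eq_zero hR.le hV hum_zero hum'_zero (right_mem_Icc.2 hR.le)
  · refine hz ⟨up, up', hup, ?_, 0, left_mem_Icc.2 hR.le, by simp [hup0]⟩
    ext i
    fin_cases i
    · simpa [bTrace, hup0] using hup0'
    · simpa [bTrace] using hupR

/-- Let `θ₀, θ_R ∈ S_{2π}`, `z ∈ ℂ \ σ(H_{θ₀,θ_R})`, and let
`u₊ = u_{+,θ_R}(z,·)`, `u₋ = u_{−,θ₀}(z,·)` be the distinguished solutions.  The
Wronskian `W(z) = W(u₊,u₋) = u₊ u₋' − u₊' u₋` (which is constant on `[0,R]`)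
admits the two factorizations
`[−sin θ₀ u₋(0) + cos θ₀ u₋'(0)]·[cos θ₀ + sin θ₀ u₊'(0)] = W(z)
 = [cos θ_R − sin θ_R u₋'(R)]·[−sin θ_R u₊(R) − cos θ_R u₊'(R)]`,
and `W(z) ≠ 0`. -/
theorem wronskian_factorizations
    (R : ℝ) (hR : 0 < R) (V : ℝ → ℂ) (hV : IntegrableOn V (Ioo 0 R))
    (θ0 θR : ℂ) (hθ0 : θ0 ∈ S2pi) (hθR : θR ∈ S2pi)
    (z : ℂ) (hz : ¬ IsEigenvalue R V θ0 θR z)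
    (up up' um um' : ℝ → ℂ)
    (hup : IsSol R V z up up') (hup0 : up 0 = 1)
    (hupR : Complex.cos θR * up R - Complex.sin θR * up' R = 0)
    (hum : IsSol R V z um um') (humR : um R = 1)
    (hum0 : Complex.cos θ0 * um 0 + Complex.sin θ0 * um' 0 = 0) :
    (-Complex.sin θ0 * um 0 + Complex.cos θ0 * um' 0) *
        (Complex.cos θ0 + Complex.sin θ0 * up' 0) =
      up 0 * um' 0 - up' 0 * um 0 ∧
    up 0 * um' 0 - up' 0 * um 0 = up R * um' R - up' R * um R ∧
    (Complex.cos θR - Complex.sin θR * um' R) *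
        (-Complex.sin θR * up R - Complex.cos θR * up' R) =
      up R * um' R - up' R * um R ∧
    up 0 * um' 0 - up' 0 * um 0 ≠ 0 :=
  wronskian_factorizations_general R hR V hV θ0 θR z hz up up' um um' hup hup0 hupR hum humR hum0
end
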